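/- arXiv:1812.00576 — 9 statements merged into one kernel-verified Lean document; each statement's English description precedes it below -/
import Mathlib

section
/- A non-empty set system B of subsets of a finite set N is min-balanced (i.e., a minimal system such that the indicator vector of the union of B lies in the conic hull of the indicator vectors of the members of B) if and only if (i) there exist strictly positive coefficients λ_S > 0 for S ∈ B with χ_{⋃B} = Σ_{S∈B} λ_S · χ_S, and (ii) the indicator vectors {χ_S : S ∈ B} are linearly independent in ℝ^N. -/
open Finset

variable {ι : Type*} [DecidableEq ι]

/-- The 0/1 indicator vector of a finite set `S`. -/
def chi (S : Finset ι) : ι → ℝ := fun i => if i ∈ S then 1 else 0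

/-- `v` lies in the conic hull of the indicator vectors of the members of `B`. -/
def inConicHull (B : Finset (Finset ι)) (v : ι → ℝ) : Prop :=
  ∃ lam : Finset ι → ℝ, (∀ S ∈ B, 0 ≤ lam S) ∧
    ∀ i, v i = ∑ S ∈ B, lam S * chi S i

/-- `B` is min-balanced: a minimal set system such that the indicator of its carrier
`⋃B` lies in the conic hull of the indicators of its members. -/
def MinBalancedDef (B : Finset (Finset ι)) : Prop :=
  B.Nonempty ∧ inConicHull B (chi (B.sup id)) ∧
    ∀ C : Finset (Finset ι), C ⊂ B → ¬ inConicHull C (chi (B.sup id))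

lemma helper_erase {B : Finset (Finset ι)} {v : ι → ℝ} {lam : Finset ι → ℝ}
    (hlam : ∀ S ∈ B, 0 < lam S)
    (hsum : ∀ i, v i = ∑ S ∈ B, lam S * chi S i)
    {c : Finset ι → ℝ} (hc : ∀ i, ∑ S ∈ B, c S * chi S i = 0)
    {S₀ : Finset ι} (hS₀ : S₀ ∈ B) (hpos : 0 < c S₀) :
    ∃ C, C ⊂ B ∧ inConicHull C v := by
  classical
  set T := B.filter (fun S => 0 < c S) with hT
  have hS₀T : S₀ ∈ T := by simp [hT, hS₀, hpos]
  obtain ⟨S', hS'T, hmin⟩ := T.exists_min_image (fun S => lam S / c S) ⟨S₀, hS₀T⟩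
  have hS'B : S' ∈ B := (mem_filter.mp hS'T).1
  have hcS' : 0 < c S' := (mem_filter.mp hS'T).2
  set t := lam S' / c S' with ht
  refine ⟨B.erase S', erase_ssubset hS'B, fun S => lam S - t * c S, ?_, ?_⟩
  · intro S hS
    show (0:ℝ) ≤ lam S - t * c S
    have hSB : S ∈ B := mem_of_mem_erase hS
    by_cases hcs : 0 < c S
    · have hST : S ∈ T := mem_filter.mpr ⟨hSB, hcs⟩
      have h0 := hmin S hST
      have h1 : t * c S ≤ (lam S / c S) * c S :=
        mul_le_mul_of_nonneg_right h0 hcs.le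
      rw [div_mul_cancel₀ _ hcs.ne'] at h1
      linarith
    · push_neg at hcs
      have h0 : 0 ≤ t := div_nonneg (hlam S' hS'B).le hcS'.le
      nlinarith [hlam S hSB]
  · intro i
    have hz : lam S' - t * c S' = 0 := by
      rw [ht, div_mul_cancel₀ _ hcS'.ne']; ring
    have h1 : ∑ S ∈ B.erase S', (lam S - t * c S) * chi S i
        = ∑ S ∈ B, (lam S - t * c S) * chi S i := by
      apply Finset.sum_erase
      rw [hz, zero_mul]
    have h2 : ∑ S ∈ B, (lam S - t * c S) * chi S i
        = (∑ S ∈ B, lam S * chi S i) - t * ∑ S ∈ B, c S * chi S i := by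
      rw [Finset.mul_sum, ← Finset.sum_sub_distrib]
      apply Finset.sum_congr rfl; intro S _; ring
    rw [h1, h2, hc, hsum i]; ring

theorem stmt0 (B : Finset (Finset ι)) (hB : B.Nonempty) :
    MinBalancedDef B ↔
      ((∃ lam : Finset ι → ℝ, (∀ S ∈ B, 0 < lam S) ∧
          ∀ i, chi (B.sup id) i = ∑ S ∈ B, lam S * chi S i) ∧
        LinearIndependent ℝ (fun S : {x // x ∈ B} => chi (S.1 : Finset ι))) := by
  classical
  constructor
  · rintro ⟨-, ⟨lam, hnn, hsum⟩, hmin⟩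
    have hpos : ∀ S ∈ B, 0 < lam S := by
      intro S hS
      rcases lt_or_eq_of_le (hnn S hS) with h | h
      · exact h
      · exfalso
        apply hmin (B.erase S) (erase_ssubset hS)
        refine ⟨lam, fun T hT => hnn T (mem_of_mem_erase hT), fun i => ?_⟩
        rw [Finset.sum_erase _ (by rw [← h, zero_mul])]
        exact hsum i
    refine ⟨⟨lam, hpos, hsum⟩, ?_⟩
    rw [Fintype.linearIndependent_iff]
    intro g hg
    by_contra hne
    push_neg at hne
    obtain ⟨x₀, hx₀⟩ := hne
    set c : Finset ι → ℝ := fun S => if h : S ∈ B then g ⟨S, h⟩ else 0 with hcd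
    have hc : ∀ i, ∑ S ∈ B, c S * chi S i = 0 := by
      intro i
      have hgi := congrFun hg i
      rw [Finset.sum_apply] at hgi
      calc ∑ S ∈ B, c S * chi S i
          = ∑ x ∈ B.attach, c x.1 * chi x.1 i := (Finset.sum_attach _ _).symm
        _ = ∑ x ∈ B.attach, (g x • chi x.1) i := by
            apply Finset.sum_congr rfl; intro x _
            simp [hcd, x.2]
        _ = 0 := hgi
    have hcx₀ : c x₀.1 = g x₀ := by simp [hcd, x₀.2]
    rcases lt_trichotomy (g x₀) 0 with h | h | h
    · have hc' : ∀ i, ∑ S ∈ B, (-c) S * chi S i = 0 := by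
        intro i
        simp only [Pi.neg_apply, neg_mul]
        rw [Finset.sum_neg_distrib, hc i, neg_zero]
      obtain ⟨C, hC, hCh⟩ := helper_erase hpos hsum hc' x₀.2
        (by simp only [Pi.neg_apply, hcx₀]; linarith)
      exact hmin C hC hCh
    · exact hx₀ h
    · obtain ⟨C, hC, hCh⟩ := helper_erase hpos hsum hc x₀.2 (by rw [hcx₀]; exact h)
      exact hmin C hC hCh
  · rintro ⟨⟨lam, hpos, hsum⟩, hli⟩
    refine ⟨hB, ⟨lam, fun S hS => (hpos S hS).le, hsum⟩, ?_⟩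
    rintro C hC ⟨mu, hmu, hmusum⟩
    obtain ⟨S₀, hS₀B, hS₀C⟩ := exists_of_ssubset hC
    set d : Finset ι → ℝ := fun S => lam S - (if S ∈ C then mu S else 0) with hd
    have key : ∀ i, ∑ S ∈ B, d S * chi S i = 0 := by
      intro i
      have h1 : ∑ S ∈ B, (if S ∈ C then mu S else 0) * chi S i
          = ∑ S ∈ C, mu S * chi S i := by
        rw [← Finset.sum_subset hC.subset]
        · apply Finset.sum_congr rfl; intro S hS; simp [hS]
        · intro S _ hS; simp [hS]
      have h2 : ∑ S ∈ B, d S * chi S i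
          = (∑ S ∈ B, lam S * chi S i) - ∑ S ∈ B, (if S ∈ C then mu S else 0) * chi S i := by
        rw [← Finset.sum_sub_distrib]
        apply Finset.sum_congr rfl; intro S _; rw [hd]; ring
      rw [h2, h1, ← hsum i, ← hmusum i]; ring
    have hall := Fintype.linearIndependent_iff.mp hli (fun x => d x.1) ?_ ⟨S₀, hS₀B⟩
    · simp only [hd, if_neg hS₀C, sub_zero] at hall
      exact absurd hall (ne_of_gt (hpos S₀ hS₀B))
    · funext i
      rw [Finset.sum_apply]
      calc ∑ x ∈ Finset.univ, ((fun x : {x // x ∈ B} => d x.1) x • chi x.1) i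
          = ∑ x ∈ B.attach, d x.1 * chi x.1 i := by
            apply Finset.sum_congr rfl; intro x _; simp
        _ = ∑ S ∈ B, d S * chi S i := Finset.sum_attach B (fun S => d S * chi S i)
        _ = 0 := key i
end

section
/- If a game m on N and its negative −m are both balanced, and m(S) = 0 for all S ⊆ N with |S| ≤ 1, then m is the zero game. -/
open Finset

variable {ι : Type*} [DecidableEq ι] [Fintype ι]

/-- The core of a game `m` on the player set `ι`. -/
def core (m : Finset ι → ℝ) : Set (ι → ℝ) :=
  {x | ∑ i, x i = m Finset.univ ∧ ∀ S : Finset ι, m S ≤ ∑ i ∈ S, x i}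

theorem stmt9 (hcard : 2 ≤ Fintype.card ι) (m : Finset ι → ℝ) (h0 : m ∅ = 0)
    (hsmall : ∀ S : Finset ι, S.card ≤ 1 → m S = 0)
    (hbal : (core m).Nonempty) (hbal' : (core (fun S => -(m S))).Nonempty) :
    ∀ S : Finset ι, m S = 0 := by
  obtain ⟨x, hx1, hx2⟩ := hbal
  obtain ⟨y, hy1, hy2⟩ := hbal'
  have hxnn : ∀ i, 0 ≤ x i := fun i => by
    have := hx2 {i}
    simpa [hsmall {i} (by simp)] using this
  have hynn : ∀ i, 0 ≤ y i := fun i => by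
    have := hy2 {i}
    simpa [hsmall {i} (by simp)] using this
  have hsum : ∑ i, (x i + y i) = 0 := by
    rw [Finset.sum_add_distrib, hx1, hy1]; ring
  have hzero : ∀ i ∈ Finset.univ, x i + y i = 0 :=
    (Finset.sum_eq_zero_iff_of_nonneg fun i _ => add_nonneg (hxnn i) (hynn i)).mp hsum
  have hx0 : ∀ i, x i = 0 := fun i => by
    have := hzero i (Finset.mem_univ i)
    linarith [hxnn i, hynn i]
  have hy0 : ∀ i, y i = 0 := fun i => by
    have := hzero i (Finset.mem_univ i)
    linarith [hxnn i, hynn i]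
  intro S
  have h1 := hx2 S
  have h2 := hy2 S
  simp only [hx0, hy0, Finset.sum_const_zero] at h1 h2
  linarith
end

section
/- The linearity space of the cone of balanced games equals the space of modular games: a game m is such that both m and −m are balanced if and only if m is modular (m(C∪D)+m(C∩D)=m(C)+m(D) for all C,D ⊆ N). -/
open Finset

variable {ι : Type*} [DecidableEq ι] [Fintype ι]

/-! If `m` and `-m` are both balanced, any core element `x` of `m` represents `m` additively,
`m S = ∑ i ∈ S, x i`, and additive games are modular. Conversely a modular game with `m ∅ = 0`
is additive with `x i = m {i}`, and this `x` (resp. `-x`) lies in the core of `m` (resp. `-m`). -/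

theorem eq_sum_singleton_of_modular {α : Type*} [DecidableEq α] {m : Finset α → ℝ}
    (h0 : m ∅ = 0) (hmod : ∀ C D : Finset α, m (C ∪ D) + m (C ∩ D) = m C + m D)
    (S : Finset α) : m S = ∑ i ∈ S, m {i} := by
  induction S using Finset.induction_on with
  | empty => simpa using h0
  | @insert a S ha ih =>
    have hsplit := hmod {a} S
    rw [singleton_inter_of_notMem ha, h0, add_zero, singleton_union] at hsplit
    rw [sum_insert ha, ← ih, hsplit]

theorem modular_of_eq_sum {α : Type*} [DecidableEq α] {m : Finset α → ℝ} {x : α → ℝ}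
    (hx : ∀ S, m S = ∑ i ∈ S, x i) (C D : Finset α) :
    m (C ∪ D) + m (C ∩ D) = m C + m D := by
  simp only [hx, sum_union_inter]

theorem mem_core_of_eq_sum {α : Type*} [Fintype α] {m : Finset α → ℝ} {x : α → ℝ}
    (hx : ∀ S, m S = ∑ i ∈ S, x i) : x ∈ core m :=
  ⟨(hx univ).symm, fun S => (hx S).le⟩

/- Both cores bound `m S + m Sᶜ` against `m univ`, from opposite sides, which squeezes
`∑ i ∈ S, x i` between `m S` and `m univ - m Sᶜ ≤ m S`. -/
theorem sum_eq_of_mem_core_of_mem_core_neg {α : Type*} [DecidableEq α] [Fintype α]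
    {m : Finset α → ℝ} {x y : α → ℝ}
    (hx : x ∈ core m) (hy : y ∈ core (fun S => -(m S))) (S : Finset α) :
    ∑ i ∈ S, x i = m S := by
  obtain ⟨hx_univ, hx_ge⟩ := hx
  obtain ⟨hy_univ, hy_ge⟩ := hy
  have hx_split := sum_add_sum_compl S x
  have hy_split := sum_add_sum_compl S y
  linarith [hx_ge S, hx_ge Sᶜ, hy_ge S, hy_ge Sᶜ]

theorem stmt10 (m : Finset ι → ℝ) (h0 : m ∅ = 0) :
    ((core m).Nonempty ∧ (core (fun S => -(m S))).Nonempty) ↔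
      ∀ C D : Finset ι, m (C ∪ D) + m (C ∩ D) = m C + m D := by
  constructor
  · rintro ⟨⟨x, hx⟩, ⟨y, hy⟩⟩
    exact modular_of_eq_sum fun S => (sum_eq_of_mem_core_of_mem_core_neg hx hy S).symm
  · intro hmod
    have hadd := eq_sum_singleton_of_modular h0 hmod
    refine ⟨⟨fun i => m {i}, mem_core_of_eq_sum hadd⟩, ⟨fun i => -m {i}, ?_⟩⟩
    exact mem_core_of_eq_sum fun S => by rw [sum_neg_distrib, hadd]
end

section
/- The game m on N = {a,b,c} given by m(N)=3, m(S)=2 for all two-element S, m(S)=0 for |S| ≤ 1, is totally balanced (indeed m(S) = min over x in {(1,1,1),(2,2,0),(2,0,2),(0,2,2)} of Σ_{i∈S} x_i for all S), but its anti-dual game S ↦ m(N∖S) − m(N) is not totally balanced: its restriction to subsets of {a,b} has empty core. -/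
open Finset

variable {ι : Type*} [DecidableEq ι] [Fintype ι]

/-- The core of the subgame of `g` restricted to subsets of `A`. -/
def coreOn (A : Finset ι) (g : Finset ι → ℝ) : Set (ι → ℝ) :=
  {x | ∑ i ∈ A, x i = g A ∧ ∀ S ⊆ A, g S ≤ ∑ i ∈ S, x i}

/-- A game is totally balanced if every subgame has a non-empty core. -/
def TotallyBalanced (g : Finset ι → ℝ) : Prop :=
  ∀ A : Finset ι, A.Nonempty → (coreOn A g).Nonempty

/-- The game on `N = {a,b,c}` (encoded as `Fin 3`): value 3 on `N`, 2 on two-element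
coalitions and 0 on smaller coalitions. -/
def m12 : Finset (Fin 3) → ℝ :=
  fun S => if S.card = 3 then 3 else if S.card = 2 then 2 else 0

/-- The anti-dual game of `m12`. -/
def ad12 : Finset (Fin 3) → ℝ := fun S => m12 Sᶜ - m12 Finset.univ

/-- The min-representation of `m12`. -/
def X12 : Set (Fin 3 → ℝ) := {![1,1,1], ![2,2,0], ![2,0,2], ![0,2,2]}

theorem stmt12 :
    TotallyBalanced m12 ∧
    (∀ S : Finset (Fin 3), IsLeast ((fun x => ∑ i ∈ S, x i) '' X12) (m12 S)) ∧
    coreOn ({0,1} : Finset (Fin 3)) ad12 = ∅ ∧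
    ¬ TotallyBalanced ad12 := by
  have key : ∀ x : Fin 3 → ℝ, ∀ A : Finset (Fin 3),
      (∑ i ∈ A, x i = m12 A) → (∀ S ⊆ A, m12 S ≤ ∑ i ∈ S, x i) →
      (coreOn A m12).Nonempty := fun x A h1 h2 => ⟨x, h1, h2⟩
  have tb : TotallyBalanced m12 := by
    intro A hA
    fin_cases A
    · exact absurd hA (by simp)
    · exact key 0 _ (by norm_num [m12]) (by
        intro S hS; fin_cases S <;>
          first | exact absurd hS (by decide) | norm_num [m12, Finset.sum_mk])
    · exact key 0 _ (by norm_num [m12]) (by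
        intro S hS; fin_cases S <;>
          first | exact absurd hS (by decide) | norm_num [m12, Finset.sum_mk])
    · exact key ![1,1,1] _ (by norm_num [m12, Finset.sum_mk]) (by
        intro S hS; fin_cases S <;>
          first | exact absurd hS (by decide) | norm_num [m12, Finset.sum_mk])
    · exact key 0 _ (by norm_num [m12]) (by
        intro S hS; fin_cases S <;>
          first | exact absurd hS (by decide) | norm_num [m12, Finset.sum_mk])
    · exact key ![1,1,1] _ (by norm_num [m12, Finset.sum_mk]) (by
        intro S hS; fin_cases S <;>
          first | exact absurd hS (by decide) | norm_num [m12, Finset.sum_mk])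
    · exact key ![1,1,1] _ (by norm_num [m12, Finset.sum_mk]) (by
        intro S hS; fin_cases S <;>
          first | exact absurd hS (by decide) | norm_num [m12, Finset.sum_mk])
    · exact key ![1,1,1] _ (by norm_num [m12, Finset.sum_mk]) (by
        intro S hS; fin_cases S <;>
          first | exact absurd hS (by decide) | norm_num [m12, Finset.sum_mk])
  have least : ∀ S : Finset (Fin 3), IsLeast ((fun x => ∑ i ∈ S, x i) '' X12) (m12 S) := by
    have lb : ∀ S : Finset (Fin 3), ∀ y ∈ (fun x => ∑ i ∈ S, x i) '' X12, m12 S ≤ y := by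
      intro S y hy
      obtain ⟨x, hx, rfl⟩ := hy
      simp only [X12, Set.mem_insert_iff, Set.mem_singleton_iff] at hx
      fin_cases S <;> rcases hx with rfl|rfl|rfl|rfl <;> norm_num [m12, Finset.sum_mk]
    intro S
    refine ⟨?_, lb S⟩
    fin_cases S
    · exact ⟨![1,1,1], by simp [X12], by norm_num [m12, Finset.sum_mk]⟩
    · exact ⟨![0,2,2], by simp [X12], by norm_num [m12, Finset.sum_mk]⟩
    · exact ⟨![2,0,2], by simp [X12], by norm_num [m12, Finset.sum_mk]⟩
    · exact ⟨![1,1,1], by simp [X12], by norm_num [m12, Finset.sum_mk]⟩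
    · exact ⟨![2,2,0], by simp [X12], by norm_num [m12, Finset.sum_mk]⟩
    · exact ⟨![1,1,1], by simp [X12], by norm_num [m12, Finset.sum_mk]⟩
    · exact ⟨![1,1,1], by simp [X12], by norm_num [m12, Finset.sum_mk]⟩
    · exact ⟨![1,1,1], by simp [X12], by norm_num [m12, Finset.sum_mk]⟩
  have empt : coreOn ({0,1} : Finset (Fin 3)) ad12 = ∅ := by
    ext x
    simp only [coreOn, Set.mem_setOf_eq, Set.mem_empty_iff_false, iff_false, not_and]
    intro h1 h2
    have ha := h2 {0} (by decide)
    have hb := h2 {1} (by decide)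
    have c1 : (({0,1} : Finset (Fin 3))ᶜ : Finset (Fin 3)) = {2} := by decide
    have c2 : (({0} : Finset (Fin 3))ᶜ : Finset (Fin 3)) = {1,2} := by decide
    have c3 : (({1} : Finset (Fin 3))ᶜ : Finset (Fin 3)) = {0,2} := by decide
    rw [show ∑ i ∈ ({0,1} : Finset (Fin 3)), x i = x 0 + x 1 by simp] at h1
    simp only [ad12, c1, c2, c3] at h1 ha hb
    norm_num [m12, show (({1,2}:Finset (Fin 3)).card = 2) from by decide,
      show (({0,2}:Finset (Fin 3)).card = 2) from by decide] at h1 ha hb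
    linarith
  refine ⟨tb, least, empt, ?_⟩
  intro h
  obtain ⟨x, hx⟩ := h ({0,1} : Finset (Fin 3)) ⟨0, by decide⟩
  rw [empt] at hx
  exact hx
end

section
/- For a non-trivial min-balanced system B on N with balancing coefficients λ_S, the standardized coefficient vector α_B satisfies: α_B is o-standardized (Σ_{S⊆N} α_B(S) = 0 and Σ_{S∋i} α_B(S) = 0 for each i ∈ N) and α_B(∅) ≥ 1 (in particular α_B(∅) > 0). -/
open Finset

variable {ι : Type*} [DecidableEq ι]

/-- `B` is a min-balanced system: there are strictly positive coefficients expressing the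
indicator of the carrier `⋃B` as a combination of the indicators of members of `B`, and
those indicator vectors are linearly independent. -/
def MinBalanced (B : Finset (Finset ι)) : Prop :=
  B.Nonempty ∧
  (∃ lam : Finset ι → ℝ, (∀ S ∈ B, 0 < lam S) ∧
      ∀ i, chi (B.sup id) i = ∑ S ∈ B, lam S * chi S i) ∧
  LinearIndependent ℝ (fun S : {x // x ∈ B} => chi (S.1 : Finset ι))

/-- The standardized coefficient vector of a min-balanced system `B` with balancing
coefficients `lam` and normalizing integer `k`. -/
noncomputable def alphaB (B : Finset (Finset ι)) (lam : Finset ι → ℝ) (k : ℕ) :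
    Finset ι → ℝ := fun S =>
  if S = B.sup id then (k : ℝ)
  else if S ∈ B then -((k : ℝ) * lam S)
  else if S = ∅ then -(k : ℝ) + (k : ℝ) * ∑ T ∈ B, lam T
  else 0

/-!
Linear independence of the `χ_S` rules out `∅ ∈ B` and, since `|B| ≥ 2`, also `M ∈ B`. Hence
`α_B = k δ_M - ∑ k λ_S δ_S + α_B(∅) δ_∅` with pairwise distinct supports, and both
standardization sums reduce to the balancing identity `∑_{S ∋ i} λ_S = χ_M(i)`.
For `α_B(∅) ≥ 1`, count elements: `|M| = ∑ λ_S |S| < (∑ λ_S) |M|` because every `S ∈ B` is a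
proper subset of `M`, so `k ∑ λ_S = ∑ c_S` is an integer strictly above `k`.
-/

lemma sum_chi [Fintype ι] (S : Finset ι) : ∑ i, chi S i = S.card := by
  simp [chi]

lemma sum_filter_mem_mul_chi (B : Finset (Finset ι)) (lam : Finset ι → ℝ) (i : ι) :
    ∑ S ∈ B with i ∈ S, lam S = ∑ S ∈ B, lam S * chi S i := by
  simp [Finset.sum_filter, chi]

section Balanced

variable {B : Finset (Finset ι)} {lam : Finset ι → ℝ}

lemma empty_notMem_of_linearIndepOn (hli : LinearIndepOn ℝ chi (B : Set (Finset ι))) :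
    ∅ ∉ B := fun h => hli.ne_zero h (by funext i; simp [chi])

/-- Otherwise `χ_M = 1 • χ_M` would be a second representation of `χ_M`, besides `∑ λ_S χ_S`. -/
lemma sup_notMem_of_linearIndepOn (hli : LinearIndepOn ℝ chi (B : Set (Finset ι)))
    (hnt : 2 ≤ B.card) (hpos : ∀ S ∈ B, 0 < lam S)
    (hsum : ∀ i, chi (B.sup id) i = ∑ S ∈ B, lam S * chi S i) :
    B.sup id ∉ B := by
  intro hM
  obtain ⟨S₀, hS₀, hS₀M⟩ := (Finset.one_lt_card_iff_nontrivial.mp hnt).exists_ne (B.sup id)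
  have hrel : ∑ S ∈ B, (lam S - if S = B.sup id then 1 else 0) • chi S = 0 := by
    funext i
    simp only [Finset.sum_apply, Pi.smul_apply, smul_eq_mul, sub_mul, Finset.sum_sub_distrib,
      ite_mul, one_mul, zero_mul, Finset.sum_ite_eq', if_pos hM, ← hsum i, sub_self,
      Pi.zero_apply]
  have h := linearIndepOn_finset_iff.mp hli _ hrel S₀ hS₀
  rw [if_neg hS₀M, sub_zero] at h
  exact (hpos S₀ hS₀).ne' h

lemma ssubset_sup_of_sup_notMem (hM : B.sup id ∉ B) {S : Finset ι} (hS : S ∈ B) :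
    S ⊂ B.sup id :=
  (Finset.le_sup (f := id) hS).lt_of_ne fun h => hM (h ▸ hS)

lemma sup_ne_empty_of_sup_notMem (hne : B.Nonempty) (hM : B.sup id ∉ B) : B.sup id ≠ ∅ := by
  obtain ⟨S, hS⟩ := hne
  obtain ⟨i, hi, -⟩ := Finset.exists_of_ssubset (ssubset_sup_of_sup_notMem hM hS)
  exact Finset.ne_empty_of_mem hi

lemma sum_mul_card_eq_card_sup [Fintype ι]
    (hsum : ∀ i, chi (B.sup id) i = ∑ S ∈ B, lam S * chi S i) :
    ∑ S ∈ B, lam S * S.card = (B.sup id).card := by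
  simp only [← sum_chi, hsum, Finset.mul_sum]
  exact Finset.sum_comm

lemma one_lt_sum_of_sup_notMem [Fintype ι] (hne : B.Nonempty)
    (hM : B.sup id ∉ B) (hpos : ∀ S ∈ B, 0 < lam S)
    (hsum : ∀ i, chi (B.sup id) i = ∑ S ∈ B, lam S * chi S i) :
    1 < ∑ S ∈ B, lam S := by
  have hcard_lt : ∀ S ∈ B, S.card < (B.sup id).card := fun S hS =>
    Finset.card_lt_card (ssubset_sup_of_sup_notMem hM hS)
  have hMpos : (0 : ℝ) < (B.sup id).card := by
    obtain ⟨S, hS⟩ := hne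
    exact_mod_cast (Nat.zero_le _).trans_lt (hcard_lt S hS)
  refine lt_of_mul_lt_mul_right ?_ hMpos.le
  calc 1 * ((B.sup id).card : ℝ) = ∑ S ∈ B, lam S * S.card := by
        rw [one_mul, sum_mul_card_eq_card_sup hsum]
    _ < ∑ S ∈ B, lam S * (B.sup id).card :=
        Finset.sum_lt_sum_of_nonempty hne fun S hS =>
          mul_lt_mul_of_pos_left (by exact_mod_cast hcard_lt S hS) (hpos S hS)
    _ = (∑ S ∈ B, lam S) * (B.sup id).card := (Finset.sum_mul ..).symm

end Balanced

section Alpha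

variable {B : Finset (Finset ι)} (lam : Finset ι → ℝ) (k : ℕ)

lemma alphaB_eq (hM : B.sup id ∉ B) (hempty : ∅ ∉ B) (hMempty : B.sup id ≠ ∅) (S : Finset ι) :
    alphaB B lam k S = (if S = B.sup id then (k : ℝ) else 0)
      + (if S ∈ B then -((k : ℝ) * lam S) else 0)
      + (if S = ∅ then -(k : ℝ) + k * ∑ T ∈ B, lam T else 0) := by
  unfold alphaB
  split_ifs <;> simp_all

lemma sum_filter_alphaB [Fintype ι] (hM : B.sup id ∉ B) (hempty : ∅ ∉ B)
    (hMempty : B.sup id ≠ ∅) (p : Finset ι → Prop) [DecidablePred p] :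
    ∑ S with p S, alphaB B lam k S = (if p (B.sup id) then (k : ℝ) else 0)
      - k * ∑ S ∈ B with p S, lam S
      + (if p ∅ then -(k : ℝ) + k * ∑ T ∈ B, lam T else 0) := by
  have hinter : ({S | p S} : Finset (Finset ι)) ∩ B = B.filter p := by
    ext S; simp [and_comm]
  simp only [alphaB_eq lam k hM hempty hMempty, Finset.sum_add_distrib, Finset.sum_ite_eq',
    Finset.sum_ite_mem, hinter, Finset.sum_neg_distrib, ← Finset.mul_sum, Finset.mem_filter,
    Finset.mem_univ, true_and, sub_eq_add_neg]

lemma alphaB_empty (hempty : ∅ ∉ B) (hMempty : B.sup id ≠ ∅) :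
    alphaB B lam k ∅ = -(k : ℝ) + k * ∑ T ∈ B, lam T := by
  simp [alphaB, hMempty.symm, hempty]

lemma one_le_alphaB_empty (hempty : ∅ ∉ B) (hMempty : B.sup id ≠ ∅) (hk : 0 < k)
    (hlam : 1 < ∑ S ∈ B, lam S) (c : Finset ι → ℤ) (hc : ∀ S ∈ B, (c S : ℝ) = k * lam S) :
    1 ≤ alphaB B lam k ∅ := by
  have hcast : ((∑ S ∈ B, c S : ℤ) : ℝ) = k * ∑ S ∈ B, lam S := by
    push_cast
    rw [Finset.mul_sum]
    exact Finset.sum_congr rfl hc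
  have hlt : (k : ℤ) < ∑ S ∈ B, c S := by
    have : (k : ℝ) < k * ∑ S ∈ B, lam S := lt_mul_of_one_lt_right (by exact_mod_cast hk) hlam
    exact_mod_cast hcast ▸ this
  have hle : (k : ℝ) + 1 ≤ ((∑ S ∈ B, c S : ℤ) : ℝ) := by exact_mod_cast hlt
  rw [alphaB_empty lam k hempty hMempty]
  linarith

end Alpha

theorem stmt14 [Fintype ι] (B : Finset (Finset ι)) (hmb : MinBalanced B) (hnt : 2 ≤ B.card)
    (lam : Finset ι → ℝ)
    (hpos : ∀ S ∈ B, 0 < lam S)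
    (hsum : ∀ i, chi (B.sup id) i = ∑ S ∈ B, lam S * chi S i)
    (k : ℕ) (hk : 0 < k) (c : Finset ι → ℤ)
    (hc : ∀ S ∈ B, (c S : ℝ) = (k : ℝ) * lam S) :
    (∑ S : Finset ι, alphaB B lam k S = 0) ∧
    (∀ i : ι, ∑ S ∈ Finset.univ.filter (fun S : Finset ι => i ∈ S), alphaB B lam k S = 0) ∧
    1 ≤ alphaB B lam k ∅ := by
  obtain ⟨hne, -, hli⟩ := hmb
  have hempty := empty_notMem_of_linearIndepOn hli
  have hM := sup_notMem_of_linearIndepOn hli hnt hpos hsum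
  have hMempty := sup_ne_empty_of_sup_notMem hne hM
  refine ⟨?_, fun i => ?_, ?_⟩
  · simpa using sum_filter_alphaB lam k hM hempty hMempty (fun _ => True)
  · rw [sum_filter_alphaB lam k hM hempty hMempty (i ∈ ·), sum_filter_mem_mul_chi, ← hsum i]
    simp [chi]
  · exact one_le_alphaB_empty lam k hempty hMempty hk
      (one_lt_sum_of_sup_notMem hne hM hpos hsum) c hc
end

section
/- If B is a non-trivial min-balanced system on N (carrier equal to N), then the complementary system B* = {N∖S : S ∈ B} is also a non-trivial min-balanced system on N, and the coefficient vectors satisfy α_{B*} = (α_B)*, i.e., α_{B*}(T) = α_B(N∖T) for all T ⊆ N. -/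
open Finset

variable {ι : Type*} [DecidableEq ι]

/-- Linear independence of the indicator family, reformulated with `Finset`-indexed sums. -/
lemma indep_finset {B : Finset (Finset ι)}
    (h : LinearIndependent ℝ (fun S : {x // x ∈ B} => chi (S.1 : Finset ι)))
    (f : Finset ι → ℝ) (hf : ∀ i, ∑ S ∈ B, f S * chi S i = 0) :
    ∀ S ∈ B, f S = 0 := by
  intro S hS
  have h0 : ∑ S ∈ B, f S • chi S = 0 := by
    funext i
    rw [Finset.sum_apply]
    simpa [smul_eq_mul] using hf i
  have hc : ∑ S : {x // x ∈ B}, (fun X => f X • chi X) (S.1 : Finset ι)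
      = ∑ S ∈ B, f S • chi S := Finset.sum_coe_sort B (fun X => f X • chi X)
  exact Fintype.linearIndependent_iff.mp h (fun S => f S.1) (hc.trans h0) ⟨S, hS⟩

/-- Converse reformulation. -/
lemma indep_of_finset {B : Finset (Finset ι)}
    (h : ∀ f : Finset ι → ℝ, (∀ i, ∑ S ∈ B, f S * chi S i = 0) → ∀ S ∈ B, f S = 0) :
    LinearIndependent ℝ (fun S : {x // x ∈ B} => chi (S.1 : Finset ι)) := by
  classical
  rw [Fintype.linearIndependent_iff]
  intro g hg T
  let f : Finset ι → ℝ := fun S => if hS : S ∈ B then g ⟨S, hS⟩ else 0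
  have hgf : ∀ S : {x // x ∈ B}, f S.1 = g S := fun S => dif_pos S.2
  have hfun : ∑ S ∈ B, f S • chi S = 0 := by
    rw [← Finset.sum_coe_sort B (fun X => f X • chi X)]
    calc ∑ S : {x // x ∈ B}, f (S.1 : Finset ι) • chi (S.1 : Finset ι)
        = ∑ S : {x // x ∈ B}, g S • chi (S.1 : Finset ι) :=
          Finset.sum_congr rfl fun S _ => by rw [hgf]
      _ = 0 := hg
  have h0 : ∀ i, ∑ S ∈ B, f S * chi S i = 0 := by
    intro i
    have := congrFun hfun i
    rw [Finset.sum_apply] at this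
    simpa [smul_eq_mul] using this
  have := h f h0 T.1 T.2
  rwa [hgf T] at this

theorem stmt15 [Fintype ι] (hcard : 2 ≤ Fintype.card ι)
    (B : Finset (Finset ι)) (hmb : MinBalanced B) (hnt : 2 ≤ B.card)
    (hcarrier : B.sup id = Finset.univ)
    (lam : Finset ι → ℝ)
    (hpos : ∀ S ∈ B, 0 < lam S)
    (hsum : ∀ i, chi (B.sup id) i = ∑ S ∈ B, lam S * chi S i)
    (k : ℕ) (hk : 0 < k) (c : Finset ι → ℤ)
    (hc : ∀ S ∈ B, (c S : ℝ) = (k : ℝ) * lam S)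
    (hgcd : Finset.gcd B c = 1) :
    MinBalanced (B.image (fun S => Sᶜ)) ∧
    (B.image (fun S => Sᶜ)).sup id = Finset.univ ∧
    2 ≤ (B.image (fun S => Sᶜ)).card ∧
    (∀ (lam' : Finset ι → ℝ) (k' : ℕ) (c' : Finset ι → ℤ),
      (∀ S ∈ B.image (fun S => Sᶜ), 0 < lam' S) →
      (∀ i, chi ((B.image (fun S => Sᶜ)).sup id) i =
          ∑ S ∈ B.image (fun S => Sᶜ), lam' S * chi S i) →
      0 < k' →
      (∀ S ∈ B.image (fun S => Sᶜ), (c' S : ℝ) = (k' : ℝ) * lam' S) →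
      Finset.gcd (B.image (fun S => Sᶜ)) c' = 1 →
      ∀ T : Finset ι, alphaB (B.image (fun S => Sᶜ)) lam' k' T = alphaB B lam k Tᶜ) := by
  classical
  obtain ⟨hne, -, hindep⟩ := hmb
  set B' : Finset (Finset ι) := B.image (fun S => Sᶜ) with hB'def
  have hcomplinj : Function.Injective (fun S : Finset ι => Sᶜ) := fun S T h => by
    simpa using congrArg (·ᶜ) h
  have hmem' : ∀ T : Finset ι, T ∈ B' ↔ Tᶜ ∈ B := by
    intro T
    constructor
    · intro hT
      obtain ⟨S, hS, rfl⟩ := Finset.mem_image.mp hT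
      simpa using hS
    · intro h
      exact Finset.mem_image.mpr ⟨Tᶜ, h, compl_compl T⟩
  have hchiuniv : ∀ i : ι, chi (univ : Finset ι) i = 1 := fun i => if_pos (mem_univ i)
  have hchic : ∀ (S : Finset ι) (i : ι), chi Sᶜ i = 1 - chi S i := by
    intro S i
    by_cases h : i ∈ S <;> simp [chi, h]
  have h1 : ∀ i, (1 : ℝ) = ∑ S ∈ B, lam S * chi S i := by
    intro i
    rw [← hchiuniv i, ← hcarrier]
    exact hsum i
  have hind := indep_finset hindep
  -- ∅ ∉ B
  have hempty : (∅ : Finset ι) ∉ B := by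
    intro h
    apply hindep.ne_zero ⟨∅, h⟩
    funext i
    simp [chi]
  -- univ ∉ B
  have huniv : (univ : Finset ι) ∉ B := by
    intro hU
    have hz : ∀ S ∈ B, lam S - (if S = univ then 1 else 0) = 0 := by
      apply hind
      intro i
      have e2 : ∑ S ∈ B, (if S = univ then (1:ℝ) else 0) * chi S i = chi univ i := by
        calc ∑ S ∈ B, (if S = univ then (1:ℝ) else 0) * chi S i
            = ∑ S ∈ B, (if S = univ then chi S i else 0) :=
              Finset.sum_congr rfl fun S _ => by split <;> simp
          _ = chi univ i := by
              rw [Finset.sum_ite_eq' B univ (fun S => chi S i), if_pos hU]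
      calc ∑ S ∈ B, (lam S - if S = univ then (1:ℝ) else 0) * chi S i
          = (∑ S ∈ B, lam S * chi S i) - ∑ S ∈ B, (if S = univ then (1:ℝ) else 0) * chi S i := by
            rw [← Finset.sum_sub_distrib]
            exact Finset.sum_congr rfl fun S _ => by ring
        _ = 0 := by rw [← h1 i, e2, hchiuniv]; ring
    obtain ⟨a, ha, b, hb, hab⟩ := Finset.one_lt_card.mp (lt_of_lt_of_le one_lt_two hnt)
    obtain ⟨S, hS, hSne⟩ : ∃ S ∈ B, S ≠ univ := by
      rcases eq_or_ne a univ with h | h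
      · exact ⟨b, hb, fun hb' => hab (h ▸ hb' ▸ rfl)⟩
      · exact ⟨a, ha, h⟩
    have := hz S hS
    rw [if_neg hSne, sub_zero] at this
    exact absurd this (ne_of_gt (hpos S hS))
  set σ : ℝ := ∑ S ∈ B, lam S with hσ
  have hrem : ∀ i, ∑ S ∈ B, lam S * (1 - chi S i) = σ - 1 := by
    intro i
    rw [hσ]
    calc ∑ S ∈ B, lam S * (1 - chi S i)
        = (∑ S ∈ B, lam S) - ∑ S ∈ B, lam S * chi S i := by
          rw [← Finset.sum_sub_distrib]
          exact Finset.sum_congr rfl fun S _ => by ring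
      _ = (∑ S ∈ B, lam S) - 1 := by rw [← h1 i]
  have hσ1 : 1 < σ := by
    obtain ⟨S0, hS0⟩ := hne
    have hS0ne : S0 ≠ univ := fun h => huniv (h ▸ hS0)
    obtain ⟨i0, hi0⟩ : ∃ i, i ∉ S0 := by
      by_contra h
      push_neg at h
      exact hS0ne (eq_univ_iff_forall.mpr h)
    have key : lam S0 * (1 - chi S0 i0) ≤ ∑ S ∈ B, lam S * (1 - chi S i0) := by
      apply Finset.single_le_sum _ hS0
      intro S hS
      have : chi S i0 ≤ 1 := by by_cases h : i0 ∈ S <;> simp [chi, h]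
      have h0 : 0 ≤ 1 - chi S i0 := by linarith
      exact mul_nonneg (hpos S hS).le h0
    rw [hrem i0] at key
    have : chi S0 i0 = 0 := if_neg hi0
    rw [this] at key
    have := hpos S0 hS0
    linarith
  have hσ0 : σ - 1 ≠ 0 := by linarith
  -- carrier of B'
  have hsup' : B'.sup id = univ := by
    apply eq_univ_iff_forall.mpr
    intro i
    obtain ⟨S, hS, hiS⟩ : ∃ S ∈ B, i ∉ S := by
      by_contra h
      push_neg at h
      have : (1 : ℝ) = σ := by
        rw [h1 i, hσ]
        exact Finset.sum_congr rfl fun S hS => by simp [chi, h S hS]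
      linarith
    exact Finset.mem_sup.mpr ⟨Sᶜ, (hmem' Sᶜ).mpr (by simpa using hS),
      Finset.mem_compl.mpr hiS⟩
  have hsum_image : ∀ F : Finset ι → ℝ, ∑ T ∈ B', F T = ∑ S ∈ B, F Sᶜ := fun F =>
    Finset.sum_image (fun a _ b _ h => hcomplinj h)
  -- the balancing coefficients for B'
  have h1' : ∀ i, ∑ T ∈ B', (lam Tᶜ / (σ - 1)) * chi T i = 1 := by
    intro i
    rw [hsum_image]
    have e : ∑ S ∈ B, (lam Sᶜᶜ / (σ - 1)) * chi Sᶜ i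
        = (∑ S ∈ B, lam S * (1 - chi S i)) / (σ - 1) := by
      rw [Finset.sum_div]
      exact Finset.sum_congr rfl fun S _ => by rw [compl_compl, hchic]; ring
    rw [e, hrem i, div_self hσ0]
  -- independence for B'
  have hind' : ∀ f : Finset ι → ℝ, (∀ i, ∑ T ∈ B', f T * chi T i = 0) → ∀ T ∈ B', f T = 0 := by
    intro f hf
    set M : ℝ := ∑ S ∈ B, f Sᶜ with hM
    have hz : ∀ S ∈ B, f Sᶜ - M * lam S = 0 := by
      apply hind
      intro i
      have h0 := hf i
      rw [hsum_image] at h0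
      have h0' : ∑ S ∈ B, f Sᶜ * (1 - chi S i) = 0 := by
        rw [← h0]
        exact Finset.sum_congr rfl fun S _ => by rw [hchic]
      have hMi : ∑ S ∈ B, f Sᶜ * chi S i = M := by
        have : ∑ S ∈ B, f Sᶜ * (1 - chi S i)
            = M - ∑ S ∈ B, f Sᶜ * chi S i := by
          rw [hM, ← Finset.sum_sub_distrib]
          exact Finset.sum_congr rfl fun S _ => by ring
        rw [this] at h0'
        linarith
      calc ∑ S ∈ B, (f Sᶜ - M * lam S) * chi S i
          = (∑ S ∈ B, f Sᶜ * chi S i) - M * ∑ S ∈ B, lam S * chi S i := by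
            rw [Finset.mul_sum, ← Finset.sum_sub_distrib]
            exact Finset.sum_congr rfl fun S _ => by ring
        _ = M - M * 1 := by rw [hMi, ← h1 i]
        _ = 0 := by ring
    have hM0 : M = 0 := by
      have h2 : M = M * σ := by
        rw [hM, hσ, Finset.mul_sum]
        apply Finset.sum_congr rfl
        intro S hS
        have := hz S hS
        linarith
      have h3 : M * (σ - 1) = 0 := by nlinarith [h2]
      rcases mul_eq_zero.mp h3 with h | h
      · exact h
      · exact absurd h hσ0
    intro T hT
    have := hz Tᶜ ((hmem' T).mp hT)
    rw [compl_compl, hM0, zero_mul, sub_zero] at this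
    exact this
  have hmb' : MinBalanced B' := by
    refine ⟨hne.image _, ⟨fun T => lam Tᶜ / (σ - 1), ?_, ?_⟩, indep_of_finset hind'⟩
    · intro T hT
      exact div_pos (hpos Tᶜ ((hmem' T).mp hT)) (by linarith)
    · intro i
      rw [hsup', hchiuniv, h1' i]
  have hcard' : 2 ≤ B'.card := by
    rw [hB'def, Finset.card_image_of_injective _ hcomplinj]
    exact hnt
  refine ⟨hmb', hsup', hcard', ?_⟩
  -- part 4
  intro lam' k' c' hpos' hsum'' hk' hc' hgcd'
  have hlam' : ∀ T ∈ B', lam' T = lam Tᶜ / (σ - 1) := by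
    intro T hT
    have := hind' (fun T => lam' T - lam Tᶜ / (σ - 1)) ?_ T hT
    · linarith
    · intro i
      have e1 := hsum'' i
      rw [hsup', hchiuniv] at e1
      calc ∑ T ∈ B', (lam' T - lam Tᶜ / (σ - 1)) * chi T i
          = (∑ T ∈ B', lam' T * chi T i) - ∑ T ∈ B', (lam Tᶜ / (σ - 1)) * chi T i := by
            rw [← Finset.sum_sub_distrib]
            exact Finset.sum_congr rfl fun T _ => by ring
        _ = 0 := by rw [← e1, h1' i]; norm_num
  set m : ℤ := (∑ S ∈ B, c S) - k with hm
  have hmreal : (m : ℝ) = (k : ℝ) * (σ - 1) := by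
    have hcs : (∑ S ∈ B, (c S : ℝ)) = (k : ℝ) * σ := by
      rw [hσ, Finset.mul_sum]
      exact Finset.sum_congr rfl fun S hS => hc S hS
    push_cast [hm]
    rw [hcs]
    ring
  have hmpos : 0 < m := by
    have h0 : (0 : ℝ) < (m : ℝ) := by
      rw [hmreal]
      have : (0:ℝ) < (k:ℝ) := by exact_mod_cast hk
      nlinarith
    exact_mod_cast h0
  have hck : ∀ S ∈ B, m * c' Sᶜ = (k' : ℤ) * c S := by
    intro S hS
    have hSc : Sᶜ ∈ B' := (hmem' Sᶜ).mpr (by simpa using hS)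
    have e1 : (c' Sᶜ : ℝ) = (k' : ℝ) * lam' Sᶜ := hc' Sᶜ hSc
    have e2 : lam' Sᶜ = lam S / (σ - 1) := by rw [hlam' Sᶜ hSc, compl_compl]
    have h0 : ((m : ℤ) : ℝ) * (c' Sᶜ : ℝ) = ((k' : ℤ) : ℝ) * (c S : ℝ) := by
      rw [e1, e2, hmreal, hc S hS]
      push_cast
      field_simp
    exact_mod_cast h0
  have hk'm : (k' : ℤ) = m := by
    have h1g : Finset.gcd B (fun S => m * c' Sᶜ) = Finset.gcd B (fun S => (k' : ℤ) * c S) :=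
      Finset.gcd_congr rfl hck
    have h2g : Finset.gcd B (fun S => m * c' Sᶜ) = m := by
      rw [Finset.gcd_mul_left]
      have hg1 : Finset.gcd B (fun S => c' Sᶜ) = 1 := by
        have h := hgcd'
        rw [hB'def, Finset.gcd_image] at h
        exact h
      rw [hg1, mul_one, Int.normalize_of_nonneg hmpos.le]
    have h3g : Finset.gcd B (fun S => (k' : ℤ) * c S) = (k' : ℤ) := by
      rw [Finset.gcd_mul_left, hgcd, mul_one,
        Int.normalize_of_nonneg (by exact_mod_cast hk'.le)]
    rw [← h3g, ← h1g, h2g]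
  have hk'real : (k' : ℝ) = (k : ℝ) * (σ - 1) := by
    rw [← hmreal]
    exact_mod_cast congrArg (fun z : ℤ => (z : ℝ)) hk'm
  have hnemptyuniv : (∅ : Finset ι) ≠ (univ : Finset ι) := by
    have : Nonempty ι := Fintype.card_pos_iff.mp (by omega)
    exact (Finset.univ_nonempty.ne_empty).symm
  have hemptyB' : (∅ : Finset ι) ∉ B' := fun h => huniv (by simpa using (hmem' ∅).mp h)
  have hsumlam' : ∑ T ∈ B', lam' T = σ / (σ - 1) := by
    rw [Finset.sum_congr rfl hlam', hsum_image (fun T => lam Tᶜ / (σ - 1))]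
    simp only [compl_compl]
    rw [← Finset.sum_div, ← hσ]
  intro T
  simp only [alphaB, ← hB'def, hsup', hcarrier]
  by_cases hT1 : T = univ
  · subst hT1
    rw [if_pos rfl, compl_univ, if_neg hnemptyuniv, if_neg hempty, if_pos rfl]
    rw [hk'real]
    ring
  · rw [if_neg hT1]
    by_cases hT2 : T ∈ B'
    · rw [if_pos hT2]
      have hTc : Tᶜ ∈ B := (hmem' T).mp hT2
      have hTne : T ≠ ∅ := fun h => hemptyB' (h ▸ hT2)
      have hTcne : Tᶜ ≠ univ := fun h => hTne (by simpa using congrArg (·ᶜ) h)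
      rw [if_neg hTcne, if_pos hTc, hlam' T hT2, hk'real]
      field_simp
    · rw [if_neg hT2]
      by_cases hT3 : T = ∅
      · subst hT3
        rw [if_pos rfl, compl_empty, if_pos rfl, hsumlam', hk'real]
        field_simp
        ring
      · rw [if_neg hT3]
        have hTcne : Tᶜ ≠ univ := fun h => hT3 (by simpa using congrArg (·ᶜ) h)
        have hTcB : Tᶜ ∉ B := fun h => hT2 ((hmem' T).mpr h)
        have hTc0 : Tᶜ ≠ ∅ := fun h => hT1 (by simpa using congrArg (·ᶜ) h)
        rw [if_neg hTcne, if_neg hTcB, if_neg hTc0]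
end

section
/- For every non-empty D ⊆ N, every θ in the cone Θ^N_D (of o-standardized set functions that are non-positive outside {∅, D, N}) satisfies θ(N) ≥ 0 and θ(∅) ≥ 0; moreover, the only θ ∈ Θ^N_D with θ(N) + θ(∅) = 0 is the zero function. Hence Θ^N_D is a pointed cone. -/
open Finset

variable {ι : Type*} [DecidableEq ι] [Fintype ι]

/-- Membership in the cone `Θ^N_D`: o-standardized set functions that are
non-positive outside `{∅, D, N}`. -/
def InTheta (D : Finset ι) (θ : Finset ι → ℝ) : Prop :=
  (∀ S : Finset ι, S ≠ ∅ → S ≠ D → S ≠ Finset.univ → θ S ≤ 0) ∧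
  (∑ S : Finset ι, θ S = 0) ∧
  (∀ i : ι, ∑ S ∈ Finset.univ.filter (fun S : Finset ι => i ∈ S), θ S = 0)

theorem stmt16 (hcard : 2 ≤ Fintype.card ι) (D : Finset ι) (hD : D.Nonempty) :
    (∀ θ : Finset ι → ℝ, InTheta D θ →
      0 ≤ θ Finset.univ ∧ 0 ≤ θ ∅ ∧ (θ Finset.univ + θ ∅ = 0 → θ = 0)) ∧
    (∀ θ : Finset ι → ℝ, InTheta D θ → InTheta D (-θ) → θ = 0) := by
  have key : ∀ θ : Finset ι → ℝ, InTheta D θ →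
      0 ≤ θ Finset.univ ∧ 0 ≤ θ ∅ ∧ (θ Finset.univ + θ ∅ = 0 → θ = 0) := by
    rintro θ ⟨h1, h2, h3⟩
    obtain ⟨i, hi⟩ := hD
    -- sums over sets avoiding k also vanish
    have hcompl : ∀ k : ι, ∑ S ∈ Finset.univ.filter (fun S : Finset ι => k ∉ S), θ S = 0 := by
      intro k
      have h := Finset.sum_filter_add_sum_filter_not Finset.univ (fun S : Finset ι => k ∈ S) θ
      rw [h2, h3 k] at h
      linarith
    -- θ ∅ ≥ 0
    have hmem0 : (∅ : Finset ι) ∈ Finset.univ.filter (fun S : Finset ι => i ∉ S) := by simp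
    have h0 := Finset.add_sum_erase _ θ hmem0
    rw [hcompl i] at h0
    have herase0 : ∀ S ∈ (Finset.univ.filter (fun S : Finset ι => i ∉ S)).erase ∅, θ S ≤ 0 := by
      intro S hS
      obtain ⟨hS0, hSi⟩ := Finset.mem_erase.mp hS
      have hSi' : i ∉ S := (Finset.mem_filter.mp hSi).2
      exact h1 S hS0 (fun h => hSi' (h ▸ hi)) (fun h => hSi' (h ▸ Finset.mem_univ i))
    have h0nonneg : 0 ≤ θ ∅ := by
      have := Finset.sum_nonpos herase0
      linarith
    -- θ univ ≥ 0
    obtain ⟨j, hj⟩ : ∃ j : ι, ∀ S : Finset ι, j ∈ S → S ≠ Finset.univ → θ S ≤ 0 := by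
      by_cases hDu : D = Finset.univ
      · have hne : Nonempty ι := Fintype.card_pos_iff.mp (by omega)
        obtain ⟨j⟩ := hne
        exact ⟨j, fun S hjS hSu =>
          h1 S (by rintro rfl; simp at hjS) (by rw [hDu]; exact hSu) hSu⟩
      · obtain ⟨j, _, hjD⟩ :=
          Finset.not_subset.mp (fun h => hDu (Finset.univ_subset_iff.mp h))
        exact ⟨j, fun S hjS hSu =>
          h1 S (by rintro rfl; simp at hjS) (by rintro rfl; exact hjD hjS) hSu⟩
    have hmemU : Finset.univ ∈ Finset.univ.filter (fun S : Finset ι => j ∈ S) := by simp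
    have hU := Finset.add_sum_erase _ θ hmemU
    rw [h3 j] at hU
    have heraseU : ∀ S ∈ (Finset.univ.filter (fun S : Finset ι => j ∈ S)).erase Finset.univ,
        θ S ≤ 0 := by
      intro S hS
      obtain ⟨hSu, hSj⟩ := Finset.mem_erase.mp hS
      exact hj S (Finset.mem_filter.mp hSj).2 hSu
    have hUnonneg : 0 ≤ θ Finset.univ := by
      have := Finset.sum_nonpos heraseU
      linarith
    refine ⟨hUnonneg, h0nonneg, fun hsum => ?_⟩
    have hU0 : θ Finset.univ = 0 := by linarith
    have h00 : θ ∅ = 0 := by linarith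
    -- any set containing an element outside D has θ = 0
    have step2 : ∀ k : ι, k ∉ D → ∀ S : Finset ι, k ∈ S → θ S = 0 := by
      intro k hk S hkS
      have hall : ∀ T ∈ Finset.univ.filter (fun T : Finset ι => k ∈ T), θ T ≤ 0 := by
        intro T hT
        have hkT : k ∈ T := (Finset.mem_filter.mp hT).2
        by_cases hTu : T = Finset.univ
        · rw [hTu, hU0]
        · exact h1 T (by rintro rfl; simp at hkT) (by rintro rfl; exact hk hkT) hTu
      exact (Finset.sum_eq_zero_iff_of_nonpos hall).mp (h3 k) S (by simp [hkS])
    -- any set missing an element of D has θ = 0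
    have step3 : ∀ k : ι, k ∈ D → ∀ S : Finset ι, k ∉ S → θ S = 0 := by
      intro k hk S hkS
      have hall : ∀ T ∈ Finset.univ.filter (fun T : Finset ι => k ∉ T), θ T ≤ 0 := by
        intro T hT
        have hkT : k ∉ T := (Finset.mem_filter.mp hT).2
        by_cases hT0 : T = ∅
        · rw [hT0, h00]
        · exact h1 T hT0 (fun h => hkT (h ▸ hk)) (fun h => hkT (h ▸ Finset.mem_univ k))
      exact (Finset.sum_eq_zero_iff_of_nonpos hall).mp (hcompl k) S (by simp [hkS])
    have hzero : ∀ S : Finset ι, S ≠ D → θ S = 0 := by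
      intro S hSD
      by_cases hDS : D ⊆ S
      · obtain ⟨k, hkS, hkD⟩ :=
          Finset.not_subset.mp (fun h => hSD (Finset.Subset.antisymm h hDS))
        exact step2 k hkD S hkS
      · obtain ⟨k, hkD, hkS⟩ := Finset.not_subset.mp hDS
        exact step3 k hkD S hkS
    have hD0 : θ D = 0 := by
      have h := Finset.add_sum_erase _ θ (Finset.mem_univ D)
      rw [h2] at h
      have hz : ∑ S ∈ (Finset.univ : Finset (Finset ι)).erase D, θ S = 0 :=
        Finset.sum_eq_zero (fun S hS => hzero S (Finset.ne_of_mem_erase hS))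
      linarith
    funext S
    show θ S = 0
    by_cases hSD : S = D
    · rw [hSD]; exact hD0
    · exact hzero S hSD
  refine ⟨key, fun θ hθ hθ' => ?_⟩
  obtain ⟨hU, h0, heq⟩ := key θ hθ
  obtain ⟨hU', h0', -⟩ := key (-θ) hθ'
  apply heq
  simp only [Pi.neg_apply] at hU' h0'
  linarith
end

section
/- Given a game m on N and a non-empty D ⊆ N, there exists a core element x ∈ C(m) with Σ_{i∈D} x_i = m(D) if and only if Σ_{∅≠S⊆N} θ(S)·m(S) ≥ 0 for every θ ∈ Θ^N_D. -/
/-!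
Membership of `x` in the core together with `x(D) = m(D)` is the solvability of a finite system
of linear inequalities: `m S ≤ x(S)` for every coalition `S`, `x(N) ≤ m N` and `x(D) ≤ m D`.
By Farkas' lemma, in Gale's inhomogeneous form, such a system is solvable iff every nonnegative
combination of the inequalities whose left-hand sides cancel has a nonpositive right-hand side.
Collecting the multipliers of such a combination coalition by coalition gives a set function
`θ` that is nonpositive outside `{D, N}` and balanced at every player, i.e. (after adjusting
`θ ∅`, which never matters) an element of `Θ^N_D`, and the right-hand side is `-Σ θ(S) m(S)`.

Farkas' lemma is proved by induction on the number of generators: if the separating functional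
`f` for the remaining generators is negative on the new generator `w`, project everything along
`w` onto `ker f` and separate again.
-/

namespace PointedCone

open Set

variable {E : Type*} [AddCommGroup E] [Module ℝ E]

theorem hull_image {F : Type*} [AddCommGroup F] [Module ℝ F] (P : E →ₗ[ℝ] F) (s : Set E) :
    hull ℝ (P '' s) = (hull ℝ s).map P :=
  Submodule.span_image (P.restrictScalars _)

theorem apply_nonneg_of_mem_hull {f : Module.Dual ℝ E} {s : Set E} (hs : ∀ v ∈ s, 0 ≤ f v)
    {x : E} (hx : x ∈ hull ℝ s) : 0 ≤ f x :=
  (Submodule.span_le (p := (positive ℝ ℝ).comap f)).2 hs hx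

theorem mem_hull_range_or_exists_dual_neg_of_fin :
    ∀ {n : ℕ} (v : Fin n → E) (b : E),
      b ∈ hull ℝ (range v) ∨ ∃ f : Module.Dual ℝ E, (∀ k, 0 ≤ f (v k)) ∧ f b < 0
  | 0, v, b => by
    by_cases hb : b = 0
    · exact .inl (hb ▸ zero_mem _)
    · obtain ⟨f, hf⟩ := Module.Projective.exists_dual_ne_zero ℝ hb
      refine .inr ⟨-(f b) • f, finZeroElim, ?_⟩
      simpa using mul_self_pos.2 hf
  | n + 1, v, b => by
    rw [Fin.range_fin_succ]
    rcases mem_hull_range_or_exists_dual_neg_of_fin (Fin.tail v) b with hb | ⟨f, hf, hfb⟩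
    · exact .inl (Submodule.span_mono (subset_insert _ _) hb)
    by_cases hv₀ : 0 ≤ f (v 0)
    · exact .inr ⟨f, Fin.cases hv₀ hf, hfb⟩
    push Not at hv₀
    set P : E →ₗ[ℝ] E := LinearMap.id - ((f (v 0))⁻¹ • f).smulRight (v 0)
    have hP_apply (u : E) : P u = u - ((f (v 0))⁻¹ * f u) • v 0 := rfl
    have hPv₀ : P (v 0) = 0 := by
      rw [hP_apply, inv_mul_cancel₀ hv₀.ne, one_smul, sub_self]
    rcases mem_hull_range_or_exists_dual_neg_of_fin (P ∘ Fin.tail v) (P b) with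
      hPb | ⟨g, hg, hgb⟩
    · rw [range_comp, hull_image] at hPb
      obtain ⟨z, hz, hPz⟩ := mem_map.1 hPb
      have hfz : 0 ≤ f z := apply_nonneg_of_mem_hull (forall_mem_range.2 hf) hz
      have hbz : b = ((f (v 0))⁻¹ * f (b - z)) • v 0 + z := by
        have := hP_apply (b - z)
        rw [map_sub, hPz, sub_self] at this
        rw [← sub_eq_iff_eq_add, ← sub_eq_zero, ← this]
      refine .inl (hbz ▸ add_mem (smul_mem _ ?_ (subset_hull (mem_insert _ _)))
        (Submodule.span_mono (subset_insert _ _) hz))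
      exact mul_nonneg_of_nonpos_of_nonpos (inv_nonpos.2 hv₀.le) (by rw [map_sub]; linarith)
    · refine .inr ⟨g ∘ₗ P, Fin.cases ?_ hg, hgb⟩
      simp [hPv₀]

/-- **Farkas' lemma** for finitely generated cones. -/
theorem mem_hull_range_or_exists_dual_neg {κ : Type*} [Finite κ] (v : κ → E) (b : E) :
    b ∈ hull ℝ (range v) ∨ ∃ f : Module.Dual ℝ E, (∀ k, 0 ≤ f (v k)) ∧ f b < 0 := by
  obtain ⟨n, ⟨e⟩⟩ := Finite.exists_equiv_fin κ
  simpa only [EquivLike.range_comp, e.symm.forall_congr_left, Function.comp_apply,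
    Equiv.symm_symm, Equiv.symm_apply_apply] using
    mem_hull_range_or_exists_dual_neg_of_fin (v ∘ e.symm) b

end PointedCone

/-- Gale's theorem of the alternative for affine inequalities. -/
theorem exists_forall_le_apply_of_forall_sum_smul_eq_zero {V κ : Type*} [AddCommGroup V]
    [Module ℝ V] [FiniteDimensional ℝ V] [Fintype κ] (φ : κ → Module.Dual ℝ V) (c : κ → ℝ)
    (h : ∀ y : κ → ℝ, (∀ k, 0 ≤ y k) → ∑ k, y k • φ k = 0 → ∑ k, y k * c k ≤ 0) :
    ∃ x, ∀ k, c k ≤ φ k x := by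
  -- homogenize: `(φ k, -c k)` for the inequalities and `(0, 1)` for the slack coordinate
  let g : Option κ → Module.Dual ℝ V × ℝ := fun o => o.elim (0, 1) fun k => (φ k, -c k)
  rcases PointedCone.mem_hull_range_or_exists_dual_neg g (0, -1) with hg | ⟨F, hF, hFb⟩
  · obtain ⟨a, ha⟩ := (Submodule.mem_span_range_iff_exists_fun _).1 hg
    have hfst := congrArg Prod.fst ha
    have hsnd := congrArg Prod.snd ha
    simp only [Fintype.sum_option, g, Option.elim_none, Option.elim_some, Prod.fst_add,
      Prod.snd_add, Prod.fst_sum, Prod.snd_sum, Prod.smul_fst, Prod.smul_snd, smul_zero, zero_add,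
      ← Nonneg.coe_smul, smul_eq_mul, mul_one, mul_neg, Finset.sum_neg_distrib] at hfst hsnd
    have := h (fun k => a (some k)) (fun k => (a (some k)).2) hfst
    have := (a none).2
    linarith
  · have hF₁ : 0 < F (0, 1) := by
      have : ((0, -1) : Module.Dual ℝ V × ℝ) = -(0, 1) := by simp
      rw [this, map_neg] at hFb
      linarith
    obtain ⟨x, hx⟩ := (Module.evalEquiv ℝ V).surjective (F ∘ₗ LinearMap.inl ℝ _ ℝ)
    refine ⟨(F (0, 1))⁻¹ • x, fun k => ?_⟩
    have hk := hF (some k)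
    have hsplit : g (some k) = LinearMap.inl ℝ _ ℝ (φ k) + (-c k) • (0, 1) := by simp [g]
    rw [hsplit, map_add, map_smul, ← LinearMap.comp_apply, ← hx] at hk
    simp only [Module.evalEquiv_apply, Module.Dual.eval_apply, smul_eq_mul, neg_mul,
      le_add_neg_iff_add_le, zero_add] at hk
    rw [map_smul, smul_eq_mul, le_inv_mul_iff₀ hF₁]
    linarith

def coalitionPayoff {ι : Type*} (S : Finset ι) : Module.Dual ℝ (ι → ℝ) :=
  ∑ i ∈ S, LinearMap.proj i

@[simp]
theorem coalitionPayoff_apply {ι : Type*} (S : Finset ι) (x : ι → ℝ) :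
    coalitionPayoff S x = ∑ i ∈ S, x i := by
  simp [coalitionPayoff]

open Finset

variable {ι : Type*} [DecidableEq ι] [Fintype ι]

theorem sum_mul_sum_eq_sum_mul_sum_filter_mem (θ : Finset ι → ℝ) (x : ι → ℝ) :
    ∑ S, θ S * ∑ i ∈ S, x i = ∑ i, x i * ∑ S ∈ univ.filter (fun S => i ∈ S), θ S := by
  simp_rw [mul_sum]
  exact sum_comm' (fun S i => by simp) |>.trans
    (sum_congr rfl fun i _ => sum_congr rfl fun S _ => mul_comm _ _)

theorem sum_smul_coalitionPayoff_apply_single (θ : Finset ι → ℝ) (i : ι) :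
    (∑ S, θ S • coalitionPayoff S) (Pi.single i 1) = ∑ S ∈ univ.filter (fun S => i ∈ S), θ S := by
  simp [sum_filter]

theorem InTheta.sum_mul_nonneg_of_mem_core {m : Finset ι → ℝ} {D : Finset ι} {θ : Finset ι → ℝ}
    (hθ : InTheta D θ) {x : ι → ℝ} (hx : x ∈ core m) (hxD : ∑ i ∈ D, x i = m D) :
    0 ≤ ∑ S ∈ univ.filter (fun S : Finset ι => S ≠ ∅), θ S * m S := by
  obtain ⟨hsign, -, hbal⟩ := hθ
  calc 0 = ∑ i, x i * ∑ S ∈ univ.filter (fun S => i ∈ S), θ S := by simp [hbal]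
    _ = ∑ S, θ S * ∑ i ∈ S, x i := (sum_mul_sum_eq_sum_mul_sum_filter_mem θ x).symm
    _ = ∑ S ∈ univ.filter (fun S : Finset ι => S ≠ ∅), θ S * ∑ i ∈ S, x i :=
        (sum_filter_of_ne fun S _ h => by rintro rfl; simp at h).symm
    _ ≤ _ := sum_le_sum fun S hS => ?_
  by_cases hSD : S = D
  · rw [hSD, hxD]
  by_cases hSN : S = univ
  · rw [hSN, hx.1]
  exact mul_le_mul_of_nonpos_left (hx.2 S) (hsign S (mem_filter.1 hS).2 hSD hSN)

/-- With `h = m` and `h = coalitionPayoff` these are the two sides of the inequalities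
`m S ≤ x(S)` for all `S`, `-m N ≤ -x(N)` and `-m D ≤ -x(D)`. -/
def coreSystem {M : Type*} [Neg M] (D : Finset ι) (h : Finset ι → M) : Finset ι ⊕ Fin 2 → M :=
  Sum.elim h fun j => -h (![univ, D] j)

omit [DecidableEq ι] in
theorem mem_core_of_forall_coreSystem_le {m : Finset ι → ℝ} {D : Finset ι} {x : ι → ℝ}
    (hx : ∀ k, coreSystem D m k ≤ coreSystem D coalitionPayoff k x) :
    x ∈ core m ∧ ∑ i ∈ D, x i = m D := by
  simp only [coreSystem, Sum.forall, Sum.elim_inl, Sum.elim_inr, Fin.forall_fin_two,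
    Matrix.cons_val_zero, Matrix.cons_val_one, LinearMap.neg_apply, neg_le_neg_iff,
    coalitionPayoff_apply] at hx
  obtain ⟨hS, hN, hD⟩ := hx
  exact ⟨⟨le_antisymm hN (hS univ), hS⟩, le_antisymm hD (hS D)⟩

def dualWeight (D : Finset ι) (y : Finset ι ⊕ Fin 2 → ℝ) (S : Finset ι) : ℝ :=
  (if S = univ then y (.inr 0) else 0) + (if S = D then y (.inr 1) else 0) - y (.inl S)

theorem sum_smul_coreSystem {M : Type*} [AddCommGroup M] [Module ℝ M] (D : Finset ι)
    (y : Finset ι ⊕ Fin 2 → ℝ) (h : Finset ι → M) :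
    ∑ k, y k • coreSystem D h k = -∑ S, dualWeight D y S • h S := by
  simp [Fintype.sum_sum_type, Fin.sum_univ_two, coreSystem, dualWeight, add_smul, sub_smul,
    ite_smul, sum_add_distrib, sum_sub_distrib]
  abel

theorem inTheta_update_empty {D : Finset ι} {θ : Finset ι → ℝ}
    (hsign : ∀ S, S ≠ D → S ≠ univ → θ S ≤ 0)
    (hbal : ∀ i, ∑ S ∈ univ.filter (fun S => i ∈ S), θ S = 0) :
    InTheta D (Function.update θ ∅ (θ ∅ - ∑ S, θ S)) := by
  refine ⟨fun S hS hSD hSN => ?_, ?_, fun i => ?_⟩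
  · rw [Function.update_of_ne hS]
    exact hsign S hSD hSN
  · rw [sum_update_of_mem (mem_univ _),
      sum_eq_add_sum_sdiff_singleton_of_mem (mem_univ (∅ : Finset ι))]
    ring
  · rw [← hbal i]
    exact sum_congr rfl fun S hS => Function.update_of_ne (by rintro rfl; simp at hS) _ _

theorem exists_mem_core_sum_eq_of_forall_inTheta {m : Finset ι → ℝ} (h0 : m ∅ = 0)
    {D : Finset ι} (H : ∀ θ, InTheta D θ →
      0 ≤ ∑ S ∈ univ.filter (fun S : Finset ι => S ≠ ∅), θ S * m S) :
    ∃ x ∈ core m, ∑ i ∈ D, x i = m D := by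
  suffices ∃ x, ∀ k, coreSystem D m k ≤ coreSystem D coalitionPayoff k x by
    obtain ⟨x, hx⟩ := this
    exact ⟨x, mem_core_of_forall_coreSystem_le hx⟩
  refine exists_forall_le_apply_of_forall_sum_smul_eq_zero _ _ fun y hy hbal => ?_
  set θ := dualWeight D y
  set θ₀ := Function.update θ ∅ (θ ∅ - ∑ S, θ S)
  rw [sum_smul_coreSystem, neg_eq_zero] at hbal
  have hθ₀ : InTheta D θ₀ := by
    refine inTheta_update_empty (fun S hSD hSN => ?_) fun i => ?_
    · simpa [θ, dualWeight, hSD, hSN] using hy (.inl S)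
    · rw [← sum_smul_coalitionPayoff_apply_single, hbal, LinearMap.zero_apply]
  have hm := sum_smul_coreSystem D y m
  simp only [smul_eq_mul] at hm
  calc ∑ k, y k * coreSystem D m k = -∑ S, θ S * m S := hm
    _ = -∑ S ∈ univ.filter (fun S : Finset ι => S ≠ ∅), θ₀ S * m S := by
        rw [← sum_filter_of_ne (p := fun S : Finset ι => S ≠ ∅) fun S _ h => by
          rintro rfl; simp [h0] at h]
        refine congrArg _ (sum_congr rfl fun S hS => ?_)
        rw [show θ₀ S = θ S from Function.update_of_ne (mem_filter.1 hS).2 _ _]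
    _ ≤ 0 := neg_nonpos.2 (H θ₀ hθ₀)

theorem stmt17_general (m : Finset ι → ℝ) (h0 : m ∅ = 0)
    (D : Finset ι) :
    (∃ x ∈ core m, ∑ i ∈ D, x i = m D) ↔
      ∀ θ : Finset ι → ℝ, InTheta D θ →
        0 ≤ ∑ S ∈ Finset.univ.filter (fun S : Finset ι => S ≠ ∅), θ S * m S :=
  ⟨fun ⟨_, hx, hxD⟩ _ hθ => hθ.sum_mul_nonneg_of_mem_core hx hxD,
    exists_mem_core_sum_eq_of_forall_inTheta h0⟩

theorem stmt17 (hcard : 2 ≤ Fintype.card ι) (m : Finset ι → ℝ) (h0 : m ∅ = 0)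
    (D : Finset ι) (hD : D.Nonempty) :
    (∃ x ∈ core m, ∑ i ∈ D, x i = m D) ↔
      ∀ θ : Finset ι → ℝ, InTheta D θ →
        0 ≤ ∑ S ∈ Finset.univ.filter (fun S : Finset ι => S ≠ ∅), θ S * m S :=
  stmt17_general m h0 D
end

section
/- If B is a reducible min-balanced system witnessed by A ⊂ ⋃B and B₀ ∈ B_A, then |A| ≥ 2, ⋃B_A = A, and A ∉ B. -/
open Finset

variable {ι : Type*} [DecidableEq ι]

theorem stmt18 (B : Finset (Finset ι)) (hmb : MinBalanced B)
    (A : Finset ι) (hA : A ⊂ B.sup id)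
    (B₀ : Finset ι) (hB₀ : B₀ ∈ B.filter (fun S => S ⊂ A))
    (h1 : inConicHull (B.filter (fun S => S ⊂ A)) (chi A))
    (h2 : inConicHull (insert A (B.erase B₀)) (chi (B.sup id))) :
    2 ≤ A.card ∧ (B.filter (fun S => S ⊂ A)).sup id = A ∧ A ∉ B := by
  obtain ⟨hne, ⟨mu, hmu, hmusum⟩, hli⟩ := hmb
  obtain ⟨lam, hlam, hsum⟩ := h1
  rw [Finset.mem_filter] at hB₀
  obtain ⟨hB₀B, hB₀A⟩ := hB₀
  have hempty : (∅ : Finset ι) ∉ B := by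
    intro h
    apply hli.ne_zero ⟨∅, h⟩
    funext i
    simp [chi]
  have hcard : 2 ≤ A.card := by
    have h1' : 1 ≤ B₀.card := Finset.card_pos.mpr
      (Finset.nonempty_iff_ne_empty.mpr (by rintro rfl; exact hempty hB₀B))
    have := Finset.card_lt_card hB₀A
    omega
  have hsup : (B.filter (fun S => S ⊂ A)).sup id = A := by
    apply Finset.Subset.antisymm
    · show (B.filter (fun S => S ⊂ A)).sup id ≤ A
      refine Finset.sup_le (fun S hS => ?_)
      exact (Finset.mem_filter.mp hS).2.subset
    · intro i hi
      have h1i := hsum i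
      by_contra hni
      have hz : ∀ S ∈ B.filter (fun S => S ⊂ A), lam S * chi S i = 0 := by
        intro S hS
        have hSsub : S ⊆ (B.filter (fun S => S ⊂ A)).sup id := Finset.le_sup (f := @id (Finset ι)) hS
        have : i ∉ S := fun hiS => hni (hSsub hiS)
        simp [chi, this]
      rw [Finset.sum_eq_zero hz] at h1i
      simp [chi, hi] at h1i
  refine ⟨hcard, hsup, ?_⟩
  intro hAB
  have key := Fintype.linearIndependent_iff.mp hli
    (fun S => (if S.1 = A then (1:ℝ) else 0) - (if S.1 ⊂ A then lam S.1 else 0)) ?_ ⟨A, hAB⟩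
  · simp only [] at key
    have hnA : ¬ A ⊂ A := fun h => (Finset.ssubset_iff_subset_ne.mp h).2 rfl
    rw [if_neg hnA] at key
    norm_num at key
  · funext i
    have hs : (∑ S : {x // x ∈ B},
        ((if S.1 = A then (1:ℝ) else 0) - (if S.1 ⊂ A then lam S.1 else 0)) • chi S.1) i
        = ∑ S ∈ B, ((if S = A then (1:ℝ) else 0) - (if S ⊂ A then lam S else 0)) * chi S i := by
      rw [Finset.sum_apply]
      rw [← Finset.sum_coe_sort B
        (fun S => ((if S = A then (1:ℝ) else 0) - (if S ⊂ A then lam S else 0)) * chi S i)]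
      rfl
    rw [hs]
    have : ∑ S ∈ B, ((if S = A then (1:ℝ) else 0) - (if S ⊂ A then lam S else 0)) * chi S i
        = (∑ S ∈ B, (if S = A then (1:ℝ) else 0) * chi S i)
          - ∑ S ∈ B, (if S ⊂ A then lam S else 0) * chi S i := by
      rw [← Finset.sum_sub_distrib]
      exact Finset.sum_congr rfl (fun S _ => by ring)
    rw [this]
    have e1 : ∑ S ∈ B, (if S = A then (1:ℝ) else 0) * chi S i = chi A i := by
      rw [Finset.sum_eq_single A]
      · simp
      · intro b _ hb; simp [hb]
      · intro h; exact absurd hAB h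
    have e2 : ∑ S ∈ B, (if S ⊂ A then lam S else 0) * chi S i = chi A i := by
      rw [hsum i, Finset.sum_filter]
      exact Finset.sum_congr rfl (fun S _ => by split <;> simp
        )
    rw [e1, e2]
    simp
end
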